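/- arXiv:2411.14745 — 7 statements merged into one kernel-verified Lean document; each statement's English description precedes it below -/
import Mathlib

section
/- Suppose a 0-1 matrix Q (indexed by pairs (i,j) with i indexing left edges and j indexing right edges of a path rooted at r) satisfies: Q(i,j) = 1 only if the cut weight M_r(i,j) < (1+ε)λ, and every r-side 2-respecting cut of the path has weight at least (1+ε)λ. Then Q avoids the pattern Z with ones at (2,1) and (1,2); i.e., there do not exist e₁ < e₂ and f₁ < f₂ with Q(e₂,f₁) = Q(e₁,f₂) = 1. Consequently Q has at most n' + m' − 1 ones, where n' and m' are the numbers of rows and columns of Q. -/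
/-- On a path with vertices indexed by `ℤ` and root `r = 0`, the `i`-th edge to the left of
`r` together with the `j`-th edge to the right of `r` induce the cut `Icc (-i) j`.
If the cut function `f` is posi-modular, every `r`-side interval cut has weight at least
`(1+ε)λ`, and `Q i j = 1` only when the corresponding `r`-cut has weight `< (1+ε)λ`,
then `Q` avoids the 2×2 anti-diagonal pattern `Z` (there are no `e₁ < e₂`, `f₁ < f₂` with
`Q e₂ f₁ = Q e₁ f₂ = 1`), and consequently `Q` has at most `n' + m' - 1` ones. -/
theorem Q_avoids_Z_of_posimodular (ε lam : ℝ) (hε : 0 < ε) (hlam : 0 < lam)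
    (f : Finset ℤ → ℝ)
    (hposi : ∀ X Y : Finset ℤ, f (X \ Y) + f (Y \ X) ≤ f X + f Y)
    (n' m' : ℕ) (Q : Fin n' → Fin m' → Bool) (M : Fin n' → Fin m' → ℝ)
    (hM : ∀ (i : Fin n') (j : Fin m'),
      M i j = f (Finset.Icc (-((i : ℕ) : ℤ)) ((j : ℕ) : ℤ)))
    (hQ : ∀ (i : Fin n') (j : Fin m'), Q i j = true → M i j < (1 + ε) * lam)
    (hside : ∀ a b : ℤ, a ≤ b → (b < 0 ∨ 0 < a) → (1 + ε) * lam ≤ f (Finset.Icc a b)) :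
    (¬ ∃ (e₁ e₂ : Fin n') (f₁ f₂ : Fin m'),
        e₁ < e₂ ∧ f₁ < f₂ ∧ Q e₂ f₁ = true ∧ Q e₁ f₂ = true) ∧
    (Finset.univ.filter fun p : Fin n' × Fin m' => Q p.1 p.2 = true).card ≤ n' + m' - 1 := by
  have noZ : ¬ ∃ (e₁ e₂ : Fin n') (f₁ f₂ : Fin m'),
      e₁ < e₂ ∧ f₁ < f₂ ∧ Q e₂ f₁ = true ∧ Q e₁ f₂ = true := by
    rintro ⟨e₁, e₂, f₁, f₂, he, hf, hQ1, hQ2⟩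
    have he' : ((e₁ : ℕ) : ℤ) < ((e₂ : ℕ) : ℤ) := by exact_mod_cast he
    have hf' : ((f₁ : ℕ) : ℤ) < ((f₂ : ℕ) : ℤ) := by exact_mod_cast hf
    have he1 : (0 : ℤ) ≤ ((e₁ : ℕ) : ℤ) := Int.ofNat_nonneg _
    have hf1 : (0 : ℤ) ≤ ((f₁ : ℕ) : ℤ) := Int.ofNat_nonneg _
    set a := ((e₁ : ℕ) : ℤ)
    set b := ((e₂ : ℕ) : ℤ)
    set c := ((f₁ : ℕ) : ℤ)
    set d := ((f₂ : ℕ) : ℤ)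
    have hAB : Finset.Icc (-b) c \ Finset.Icc (-a) d = Finset.Icc (-b) (-a - 1) := by
      ext x; simp only [Finset.mem_sdiff, Finset.mem_Icc]; omega
    have hBA : Finset.Icc (-a) d \ Finset.Icc (-b) c = Finset.Icc (c + 1) d := by
      ext x; simp only [Finset.mem_sdiff, Finset.mem_Icc]; omega
    have h1 : (1 + ε) * lam ≤ f (Finset.Icc (-b) (-a - 1)) :=
      hside _ _ (by omega) (Or.inl (by omega))
    have h2 : (1 + ε) * lam ≤ f (Finset.Icc (c + 1) d) :=
      hside _ _ (by omega) (Or.inr (by omega))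
    have hp := hposi (Finset.Icc (-b) c) (Finset.Icc (-a) d)
    rw [hAB, hBA] at hp
    have hm1 := hQ _ _ hQ1
    have hm2 := hQ _ _ hQ2
    rw [hM] at hm1 hm2
    linarith
  refine ⟨noZ, ?_⟩
  -- ones form a staircase; the sum of coordinates is injective on them
  have key : ∀ p q : Fin n' × Fin m', Q p.1 p.2 = true → Q q.1 q.2 = true →
      p.1 < q.1 → ¬ q.2 < p.2 := by
    intro p q hp hq h1 h2
    exact noZ ⟨p.1, q.1, q.2, p.2, h1, h2, hq, hp⟩
  have hinj : Set.InjOn (fun p : Fin n' × Fin m' => (p.1 : ℕ) + (p.2 : ℕ))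
      ↑(Finset.univ.filter fun p : Fin n' × Fin m' => Q p.1 p.2 = true) := by
    intro p hp q hq hpq
    simp only [Finset.coe_filter, Set.mem_setOf_eq] at hp hq
    simp only at hpq
    rcases lt_trichotomy p.1 q.1 with h | h | h
    · have h2 : p.2 ≤ q.2 := le_of_not_gt (key p q hp.2 hq.2 h)
      have h1 : (p.1 : ℕ) < (q.1 : ℕ) := h
      have h2' : (p.2 : ℕ) ≤ (q.2 : ℕ) := h2
      omega
    · have : (p.2 : ℕ) = (q.2 : ℕ) := by
        have : (p.1 : ℕ) = (q.1 : ℕ) := by rw [h]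
        omega
      exact Prod.ext h (Fin.ext this)
    · have h2 : q.2 ≤ p.2 := le_of_not_gt (key q p hq.2 hp.2 h)
      have h1 : (q.1 : ℕ) < (p.1 : ℕ) := h
      have h2' : (q.2 : ℕ) ≤ (p.2 : ℕ) := h2
      omega
  rcases Finset.eq_empty_or_nonempty
      (Finset.univ.filter fun p : Fin n' × Fin m' => Q p.1 p.2 = true) with hemp | ⟨w, hw⟩
  · simp [hemp]
  · have hn : 0 < n' := w.1.pos
    have hm : 0 < m' := w.2.pos
    have hmap : ∀ p ∈ (Finset.univ.filter fun p : Fin n' × Fin m' => Q p.1 p.2 = true),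
        (p.1 : ℕ) + (p.2 : ℕ) ∈ Finset.range (n' + m' - 1) := by
      intro p _
      have := p.1.isLt
      have := p.2.isLt
      simp only [Finset.mem_range]
      omega
    calc (Finset.univ.filter fun p : Fin n' × Fin m' => Q p.1 p.2 = true).card
        ≤ (Finset.range (n' + m' - 1)).card := Finset.card_le_card_of_injOn _ hmap hinj
      _ = n' + m' - 1 := Finset.card_range _
end

section
/- In the parallel MWU algorithm with multiplicative weight updates w_i ← w_i(1 + (Ag)_i) starting from w = 1, at every iteration t the total weight satisfies ⟨1, w^(t)⟩ ≤ m · exp((1+ε) Σ_{s=0}^{t−1} ⟨1, g^(s)⟩ / (⟨1, w^(s)⟩ / λ^(s))), provided that in each iteration s the support of g^(s) is contained in the set of columns j with (Aᵀw^(s))_j < (1+ε)λ^(s). -/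
open Finset in
/-- Weight upper bound for parallel MWU: with multiplicative updates
`w^(s+1) = w^(s) ∘ (1 + A g^(s))` from `w^(0) = 1`, if in each iteration the support of
`g^(s)` is contained in `{j : (Aᵀ w^(s))_j < (1+ε) λ^(s)}`, then at every iteration `t`,
`⟨1, w^(t)⟩ ≤ m · exp((1+ε) Σ_{s<t} ⟨1, g^(s)⟩ / (⟨1, w^(s)⟩ / λ^(s)))`. -/
theorem mwu_weight_upper_bound (m N : ℕ) (ε : ℝ) (hε : 0 < ε)
    (A : Matrix (Fin m) (Fin N) ℝ) (hA : ∀ i j, 0 ≤ A i j)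
    (g : ℕ → Fin N → ℝ) (hg : ∀ s j, 0 ≤ g s j)
    (lam : ℕ → ℝ) (hlam : ∀ s, 0 < lam s)
    (w : ℕ → Fin m → ℝ)
    (hw0 : ∀ i, w 0 i = 1)
    (hwrec : ∀ s i, w (s + 1) i = w s i * (1 + A.mulVec (g s) i))
    (hsupp : ∀ s j, g s j ≠ 0 → A.transpose.mulVec (w s) j < (1 + ε) * lam s) :
    ∀ t, ∑ i, w t i ≤
      m * Real.exp ((1 + ε) *
        ∑ s ∈ Finset.range t, (∑ j, g s j) / ((∑ i, w s i) / lam s)) := by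
  rcases Nat.eq_zero_or_pos m with hm | hm
  · subst hm
    intro t
    simp
  have hwpos : ∀ s i, 0 < w s i := by
    intro s
    induction s with
    | zero => intro i; rw [hw0]; norm_num
    | succ s ih =>
      intro i
      rw [hwrec]
      have hAg : 0 ≤ A.mulVec (g s) i := by
        unfold Matrix.mulVec dotProduct
        exact Finset.sum_nonneg fun j _ => mul_nonneg (hA i j) (hg s j)
      nlinarith [ih i]
  have hne : Nonempty (Fin m) := Fin.pos_iff_nonempty.mp hm
  intro t
  induction t with
  | zero => simp [hw0]
  | succ t ih =>
    set W := ∑ i, w t i with hWdef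
    have hW : 0 < W := Finset.sum_pos (fun i _ => hwpos t i) Finset.univ_nonempty
    have hG : 0 ≤ ∑ j, g t j := Finset.sum_nonneg fun j _ => hg t j
    have hswap : ∑ i, w t i * A.mulVec (g t) i
        = ∑ j, A.transpose.mulVec (w t) j * g t j := by
      simp only [Matrix.mulVec, dotProduct, Matrix.transpose_apply,
        Finset.mul_sum, Finset.sum_mul]
      rw [Finset.sum_comm]
      congr 1; ext j; congr 1; ext i; ring
    have hbound : ∑ j, A.transpose.mulVec (w t) j * g t j
        ≤ (1 + ε) * lam t * ∑ j, g t j := by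
      rw [Finset.mul_sum]
      apply Finset.sum_le_sum
      intro j _
      by_cases h : g t j = 0
      · simp [h]
      · have h1 := hsupp t j h
        have h2 : 0 < g t j := lt_of_le_of_ne (hg t j) (Ne.symm h)
        nlinarith
    have hsum1 : ∑ i, w (t + 1) i = W + ∑ i, w t i * A.mulVec (g t) i := by
      simp only [hwrec, mul_add, mul_one, Finset.sum_add_distrib, hWdef]
    set x := (1 + ε) * ((∑ j, g t j) / (W / lam t)) with hxdef
    have hlt := hlam t
    have hx : 0 ≤ x := by
      apply mul_nonneg (by linarith)
      positivity
    have hWx : W * x = (1 + ε) * lam t * ∑ j, g t j := by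
      rw [hxdef]
      field_simp
    have step : ∑ i, w (t + 1) i ≤ W * Real.exp x := by
      have h1 : ∑ i, w (t + 1) i ≤ W * (1 + x) := by
        rw [hsum1, hswap]
        nlinarith [hbound]
      have h2 : 1 + x ≤ Real.exp x := by
        have := Real.add_one_le_exp x
        linarith
      calc ∑ i, w (t + 1) i ≤ W * (1 + x) := h1
        _ ≤ W * Real.exp x := by nlinarith
    calc ∑ i, w (t + 1) i ≤ W * Real.exp x := step
      _ ≤ (m * Real.exp ((1 + ε) *
            ∑ s ∈ Finset.range t, (∑ j, g s j) / ((∑ i, w s i) / lam s))) * Real.exp x :=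
          mul_le_mul_of_nonneg_right ih (Real.exp_nonneg x)
      _ = _ := by rw [Finset.sum_range_succ, mul_add, Real.exp_add]; ring
end

section
/- Suppose for a covering LP min{⟨1,y⟩ : Aᵀy ≥ 1, y ≥ 0} with nonnegative matrix A, at termination there is an index i with (Ax)_i = ‖Ax‖_∞ ≥ ln(m)/ε, and the bounds m·exp((1+ε)·⟨1,x⟩/min_t(⟨1,w^(t)⟩/λ^(t))) ≥ ⟨1,w^(T)⟩ ≥ w_i^(T) ≥ exp((1−ε)(Ax)_i) hold, where each w^(t)/λ^(t) is feasible for the covering LP and x/(Ax)_i is feasible for the packing LP. Then ⟨1,x⟩/(Ax)_i ≥ ((1−2ε)/(1+ε)) · min_t ⟨1,w^(t)⟩/λ^(t); in particular the returned packing and covering solutions are within factor (1+O(ε)) of each other and hence both (1+O(ε))-optimal. -/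
/-!
Taking logarithms in the chain of bounds gives `(1 - ε) (Ax)ᵢ ≤ ln m + (1 + ε) ⟨1,x⟩ / D`,
where `D` is the best covering value seen. The stopping rule `ln m ≤ ε (Ax)ᵢ` absorbs the
`ln m` term, leaving `(1 - 2ε) (Ax)ᵢ D ≤ (1 + ε) ⟨1,x⟩`.
-/

open Real

theorem le_log_add_of_exp_le_mul_exp {a b c : ℝ} (hc : 0 < c) (h : exp a ≤ c * exp b) :
    a ≤ log c + b := by
  rwa [← exp_le_exp, exp_add, exp_log hc]

theorem mul_le_div_of_sub_mul_le_add_div {ε α S D L : ℝ} (hε : 0 < ε) (hα : 0 < α)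
    (hD : 0 < D) (hL : L ≤ ε * α) (h : (1 - ε) * α ≤ L + (1 + ε) * S / D) :
    (1 - 2 * ε) / (1 + ε) * D ≤ S / α := by
  have key : (1 - 2 * ε) * α * D ≤ (1 + ε) * S := by
    rw [← le_div_iff₀ hD]
    linarith
  rw [div_mul_eq_mul_div, div_le_div_iff₀ (by linarith) hα]
  linarith

theorem mwu_correctness_general (m N : ℕ) (hm : 2 ≤ m) (ε : ℝ) (hε : 0 < ε)
    (A : Matrix (Fin m) (Fin N) ℝ)
    (x : Fin N → ℝ)
    (w : ℕ → Fin m → ℝ) (hwpos : ∀ t i, 0 < w t i)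
    (lam : ℕ → ℝ) (hlam : ∀ t, 0 < lam t)
    (T : ℕ) (i₀ : Fin m)
    (hieta : Real.log m / ε ≤ A.mulVec x i₀)
    (hub : ∑ i, w T i ≤
      m * Real.exp ((1 + ε) * (∑ j, x j) /
        ((Finset.range (T + 1)).inf' Finset.nonempty_range_add_one
          fun t => (∑ i, w t i) / lam t)))
    (hmid : w T i₀ ≤ ∑ i, w T i)
    (hlb : Real.exp ((1 - ε) * A.mulVec x i₀) ≤ w T i₀) :
    ((1 - 2 * ε) / (1 + ε)) *
        ((Finset.range (T + 1)).inf' Finset.nonempty_range_add_one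
          fun t => (∑ i, w t i) / lam t) ≤
      (∑ j, x j) / A.mulVec x i₀ := by
  have hm₁ : (1 : ℝ) < m := by exact_mod_cast hm
  have hα : 0 < A.mulVec x i₀ := (div_pos (log_pos hm₁) hε).trans_le hieta
  have hD : 0 < (Finset.range (T + 1)).inf' Finset.nonempty_range_add_one
      fun t => (∑ i, w t i) / lam t := by
    have : Nonempty (Fin m) := ⟨⟨0, by omega⟩⟩
    exact (Finset.lt_inf'_iff _).2 fun t _ =>
      div_pos (Finset.sum_pos (fun i _ => hwpos t i) Finset.univ_nonempty) (hlam t)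
  exact mul_le_div_of_sub_mul_le_add_div hε hα hD ((div_le_iff₀' hε).1 hieta)
    (le_log_add_of_exp_le_mul_exp (by positivity) (hlb.trans (hmid.trans hub)))

/-- Correctness of the MWU algorithm: at termination, if `(Ax)_{i₀} = ‖Ax‖_∞ ≥ ln(m)/ε`
and the chain of bounds
`m·exp((1+ε)⟨1,x⟩ / min_{t ≤ T}(⟨1,w^(t)⟩/λ^(t))) ≥ ⟨1,w^(T)⟩ ≥ w_{i₀}^(T) ≥ exp((1-ε)(Ax)_{i₀})`
holds, where each `w^(t)/λ^(t)` is feasible for the covering LP and `x/(Ax)_{i₀}` is feasible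
for the packing LP, then `⟨1,x⟩/(Ax)_{i₀} ≥ ((1-2ε)/(1+ε)) · min_{t ≤ T} ⟨1,w^(t)⟩/λ^(t)`. -/
theorem mwu_correctness (m N : ℕ) (hm : 2 ≤ m) (ε : ℝ) (hε : 0 < ε)
    (A : Matrix (Fin m) (Fin N) ℝ) (hA : ∀ i j, 0 ≤ A i j)
    (x : Fin N → ℝ) (hx : ∀ j, 0 ≤ x j)
    (w : ℕ → Fin m → ℝ) (hwpos : ∀ t i, 0 < w t i)
    (lam : ℕ → ℝ) (hlam : ∀ t, 0 < lam t)
    (T : ℕ) (i₀ : Fin m)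
    (himax : ∀ i, A.mulVec x i ≤ A.mulVec x i₀)
    (hieta : Real.log m / ε ≤ A.mulVec x i₀)
    (hcov : ∀ t, t ≤ T → ∀ j, 1 ≤ ∑ i, A i j * (w t i / lam t))
    (hub : ∑ i, w T i ≤
      m * Real.exp ((1 + ε) * (∑ j, x j) /
        ((Finset.range (T + 1)).inf' Finset.nonempty_range_add_one
          fun t => (∑ i, w t i) / lam t)))
    (hmid : w T i₀ ≤ ∑ i, w T i)
    (hlb : Real.exp ((1 - ε) * A.mulVec x i₀) ≤ w T i₀) :
    ((1 - 2 * ε) / (1 + ε)) *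
        ((Finset.range (T + 1)).inf' Finset.nonempty_range_add_one
          fun t => (∑ i, w t i) / lam t) ≤
      (∑ j, x j) / A.mulVec x i₀ :=
  mwu_correctness_general m N hm ε hε A x w hwpos lam hlam T i₀ hieta hub hmid hlb
end

section
/- Fix an epoch of the MWU-with-focus algorithm, with first iteration t₀ and last iteration t₁. For any intermediate iteration t₀ < t < t₁, the step size δ chosen so that ‖Ag^(t)‖_∞ = ε with g^(t) ≤ δ x^(t) satisfies δ > ε/η, where η = ln(m)/ε is the termination threshold on ‖Ax^(t)‖_∞. Consequently, since each active coordinate j grows multiplicatively by factor at least (1+ε/η) per iteration, from initial value at least ε/(|B| max_i A_{i,j}) to at most η/max_i A_{i,j}, the number of iterations in the epoch is at most O(log(m) · log(η|B|/ε) / ε²). -/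
/-!
On a step `g ≤ δ x` the row of `A` attaining `‖A g‖_∞ = ε` gives `ε ≤ δ (A x)_i < δ η`, so
`δ > ε / η`. Hence every active coordinate grows by the factor `1 + r`, `r = ε / η = ε² / ln m`,
in each inner iteration of an epoch; since it starts above `ε / (|B| · Amax)` and ends below
`η / Amax`, the number `n` of inner iterations satisfies `(1 + r)ⁿ ≤ η |B| / ε`, and
`ln (1 + r) ≥ r / 2` for `r ≤ 2` turns this into `n ≤ (2 / r) ln (η |B| / ε)`.
-/

open Matrix

theorem Matrix.mulVec_le_mulVec_of_nonneg {m n R : Type*} [Fintype n] [Semiring R]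
    [PartialOrder R] [IsOrderedRing R] {A : Matrix m n R} (hA : ∀ i j, 0 ≤ A i j)
    {u v : n → R} (huv : u ≤ v) : A *ᵥ u ≤ A *ᵥ v :=
  fun i => dotProduct_le_dotProduct_of_nonneg_left huv (hA i)

theorem div_lt_of_mulVec_eq_of_le_smul {m n : Type*} [Fintype n] {A : Matrix m n ℝ}
    (hA : ∀ i j, 0 ≤ A i j) {x g : n → ℝ} {δ ε η : ℝ} (hε : 0 < ε) (hx : 0 ≤ x)
    (hgx : g ≤ δ • x) {i : m} (hgi : (A *ᵥ g) i = ε) (hxi : (A *ᵥ x) i < η) :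
    ε / η < δ := by
  have hAgx : ε ≤ δ * (A *ᵥ x) i := by
    simpa [hgi, mulVec_smul] using mulVec_le_mulVec_of_nonneg hA hgx i
  have hAx : 0 ≤ (A *ᵥ x) i := dotProduct_nonneg_of_nonneg (hA i) hx
  have hδ : 0 < δ := by
    by_contra! hδ
    linarith [mul_nonpos_of_nonpos_of_nonneg hδ hAx]
  have hεη : ε < δ * η := hAgx.trans_lt (mul_lt_mul_of_pos_left hxi hδ)
  have hη : 0 < η := pos_of_mul_pos_right (hε.trans hεη) hδ.le
  rwa [div_lt_iff₀ hη]

theorem pow_mul_le_of_mul_le_succ {R : Type*} [Semiring R] [PartialOrder R] [IsOrderedRing R]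
    {y : ℕ → R} {c : R} (hc : 0 ≤ c) {a : ℕ} :
    ∀ {n : ℕ}, (∀ t, a ≤ t → t < a + n → c * y t ≤ y (t + 1)) → c ^ n * y a ≤ y (a + n)
  | 0, _ => by simp
  | n + 1, hy =>
    calc c ^ (n + 1) * y a = c * (c ^ n * y a) := by rw [pow_succ', mul_assoc]
      _ ≤ c * y (a + n) :=
        mul_le_mul_of_nonneg_left
          (pow_mul_le_of_mul_le_succ hc fun t ha ht => hy t ha (by omega)) hc
      _ ≤ y (a + (n + 1)) := hy (a + n) (by omega) (by omega)

theorem Real.div_two_le_log_one_add {r : ℝ} (h0 : 0 ≤ r) (h2 : r ≤ 2) :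
    r / 2 ≤ Real.log (1 + r) := by
  refine le_trans ?_ (Real.le_log_one_add_of_nonneg h0)
  rw [div_le_div_iff₀ two_pos (by linarith)]
  nlinarith

theorem nat_mul_le_two_mul_log_of_one_add_pow_mul_le {r a b : ℝ} {n : ℕ} (hr0 : 0 ≤ r)
    (hr2 : r ≤ 2) (ha : 0 < a) (h : (1 + r) ^ n * a ≤ b) : n * r ≤ 2 * Real.log (b / a) := by
  have hpow : (1 + r) ^ n ≤ b / a := (le_div_iff₀ ha).2 h
  have hlog : n * Real.log (1 + r) ≤ Real.log (b / a) := by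
    rw [← Real.log_pow]
    exact Real.log_le_log (by positivity) hpow
  nlinarith [Real.div_two_le_log_one_add hr0 hr2, (Nat.cast_nonneg n : (0 : ℝ) ≤ n)]

theorem epoch_length_le {y : ℕ → ℝ} {r a b : ℝ} {t₀ t₁ : ℕ} (hr0 : 0 < r) (hr2 : r ≤ 2)
    (ha : 0 < a) (hgrow : ∀ t, t₀ < t → t + 1 < t₁ → (1 + r) * y t ≤ y (t + 1))
    (hinit : a ≤ y (t₀ + 1)) (hlt : t₀ + 1 < t₁) (hfinal : y (t₁ - 1) ≤ b) :
    (t₁ : ℝ) - t₀ ≤ 2 / r * Real.log (b / a) + 2 := by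
  obtain ⟨n, rfl⟩ : ∃ n, t₁ = t₀ + 1 + n + 1 := ⟨t₁ - t₀ - 2, by omega⟩
  have hgeom : (1 + r) ^ n * a ≤ b :=
    calc (1 + r) ^ n * a ≤ (1 + r) ^ n * y (t₀ + 1) := by gcongr
      _ ≤ y (t₀ + 1 + n) :=
        pow_mul_le_of_mul_le_succ (by linarith) fun t ht ht' => hgrow t (by omega) (by omega)
      _ ≤ b := by simpa using hfinal
  have hn : (n : ℝ) ≤ 2 / r * Real.log (b / a) := by
    rw [div_mul_eq_mul_div, le_div_iff₀ hr0]
    exact nat_mul_le_two_mul_log_of_one_add_pow_mul_le hr0.le hr2 ha hgeom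
  push_cast
  linarith

/-- Within an epoch of the MWU-with-focus algorithm (with `η = ln(m)/ε`):
(1) the step size `δ` with `‖A g‖_∞ = ε` and `g ≤ δ x` satisfies `δ > ε/η` whenever
    `‖A x‖_∞ < η`;
(2) consequently, since each active coordinate grows by a factor at least `1 + ε/η` per
    iteration, from initial value at least `ε/(|B|·max_i A_{i,j})` to final value at most
    `η/max_i A_{i,j}`, the number of iterations in the epoch is at most
    `O(log(m)·log(η|B|/ε)/ε²)`. -/
theorem mwu_epoch_iterations (m N : ℕ) (hm : 2 ≤ m) (ε : ℝ) (hε : 0 < ε) (hε2 : ε ≤ 1 / 2)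
    (A : Matrix (Fin m) (Fin N) ℝ) (hA : ∀ i j, 0 ≤ A i j) :
    (∀ (x g : Fin N → ℝ) (δ : ℝ),
      (∀ j, 0 ≤ x j) → (∀ j, 0 ≤ g j) → (∀ j, g j ≤ δ * x j) →
      (∃ i, A.mulVec g i = ε) →
      (∀ i, A.mulVec x i < Real.log m / ε) →
      ε / (Real.log m / ε) < δ) ∧
    (∀ (y : ℕ → ℝ) (t₀ t₁ : ℕ) (Bc Amax : ℝ), 1 ≤ Bc → 0 < Amax →
      (∀ t, t₀ < t → t + 1 < t₁ → (1 + ε / (Real.log m / ε)) * y t ≤ y (t + 1)) →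
      ε / (Bc * Amax) ≤ y (t₀ + 1) →
      t₀ + 1 < t₁ →
      y (t₁ - 1) ≤ (Real.log m / ε) / Amax →
      (t₁ : ℝ) - t₀ ≤
        2 * (Real.log m / ε ^ 2) * Real.log ((Real.log m / ε) * Bc / ε) + 2) := by
  refine ⟨fun x g δ hx _ hgx ⟨i, hgi⟩ hxη =>
    div_lt_of_mulVec_eq_of_le_smul hA hε hx hgx hgi (hxη i), ?_⟩
  intro y t₀ t₁ Bc Amax hBc hAmax hgrow hinit hlt hfinal
  have hlog2 : Real.log 2 ≤ Real.log m := Real.log_le_log two_pos (by exact_mod_cast hm)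
  have hlogm : 0 < Real.log m := Real.log_pos (by exact_mod_cast hm)
  have hr : ε / (Real.log m / ε) = ε ^ 2 / Real.log m := by field_simp
  have hr2 : ε / (Real.log m / ε) ≤ 2 := by
    rw [hr, div_le_iff₀ hlogm]
    nlinarith [Real.log_two_gt_d9]
  have hrate : 2 * (Real.log m / ε ^ 2) = 2 / (ε / (Real.log m / ε)) := by
    rw [hr]
    field_simp
  have hratio : Real.log m / ε / Amax / (ε / (Bc * Amax)) = Real.log m / ε * Bc / ε := by
    field_simp
  rw [hrate, ← hratio]
  exact epoch_length_le (by positivity) hr2 (by positivity) hgrow hinit hlt hfinal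
end

section
/- Let w ∈ ℝ^E be edge weights, λ > 0, ρ = (1+ε)λ, and w_ρ the truncation of w at ρ. If every free cut (S,F) has normalized weight w(δ(S)\F)/(k−|F|) ≥ λ, and some free cut has normalized weight < ρ, then the minimum cut value of (G, w_ρ) lies in the interval [kλ, kρ). -/
/-- The set of edges of the cut `δ(S)`: edges with exactly one endpoint in `S`. -/
def cutEdges {V E : Type*} [Fintype E] [DecidableEq V]
    (ends : E → V × V) (S : Finset V) : Finset E :=
  Finset.univ.filter fun e =>
    ((ends e).1 ∈ S ∧ (ends e).2 ∉ S) ∨ ((ends e).1 ∉ S ∧ (ends e).2 ∈ S)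

/-- Range Mapping Theorem, part 1: with `ρ = (1+ε)λ` and `w_ρ` the truncation of `w` at
`ρ`, if every free cut `(S,F)` has normalized weight `w(δ(S)\F)/(k-|F|) ≥ λ` and some
free cut has normalized weight `< ρ`, then the minimum cut value of `(G, w_ρ)` lies in
`[kλ, kρ)`. -/
theorem range_mapping_part1 {V E : Type*} [Fintype V] [Fintype E] [DecidableEq V]
    [DecidableEq E]
    (ends : E → V × V) (w : E → ℝ) (hw : ∀ e, 0 ≤ w e)
    (k : ℕ) (hk : 1 ≤ k) (ε lam : ℝ) (hε : 0 < ε) (hlam : 0 < lam)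
    (hfree_lb : ∀ (S : Finset V) (F : Finset E), S.Nonempty → S ≠ Finset.univ →
      F ⊆ cutEdges ends S → F.card < k →
      lam ≤ (∑ e ∈ cutEdges ends S \ F, w e) / (k - F.card))
    (hfree_ub : ∃ (S : Finset V) (F : Finset E), S.Nonempty ∧ S ≠ Finset.univ ∧
      F ⊆ cutEdges ends S ∧ F.card < k ∧
      (∑ e ∈ cutEdges ends S \ F, w e) / (k - F.card) < (1 + ε) * lam) :
    (∀ S : Finset V, S.Nonempty → S ≠ Finset.univ →
      k * lam ≤ ∑ e ∈ cutEdges ends S, min (w e) ((1 + ε) * lam)) ∧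
    (∃ S : Finset V, S.Nonempty ∧ S ≠ Finset.univ ∧
      ∑ e ∈ cutEdges ends S, min (w e) ((1 + ε) * lam) < k * ((1 + ε) * lam)) := by

  have hρ : 0 < (1 + ε) * lam := by positivity
  have hlamr : lam ≤ (1 + ε) * lam := by nlinarith
  constructor
  · intro S hS hSu
    set F := (cutEdges ends S).filter (fun e => (1 + ε) * lam ≤ w e) with hF
    have hFsub : F ⊆ cutEdges ends S := Finset.filter_subset _ _
    have hsplit : ∑ e ∈ cutEdges ends S, min (w e) ((1 + ε) * lam)
        = ∑ e ∈ cutEdges ends S \ F, min (w e) ((1 + ε) * lam)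
          + ∑ e ∈ F, min (w e) ((1 + ε) * lam) := (Finset.sum_sdiff hFsub).symm
    have hFsum : ∑ e ∈ F, min (w e) ((1 + ε) * lam) = F.card * ((1 + ε) * lam) := by
      rw [Finset.sum_congr rfl (fun e he =>
        min_eq_right (Finset.mem_filter.mp he).2), Finset.sum_const, nsmul_eq_mul]
    have hDsum : ∑ e ∈ cutEdges ends S \ F, min (w e) ((1 + ε) * lam)
        = ∑ e ∈ cutEdges ends S \ F, w e := by
      refine Finset.sum_congr rfl fun e he => ?_
      have hm := Finset.mem_sdiff.mp he
      have hwe : w e < (1 + ε) * lam := by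
        by_contra h
        exact hm.2 (Finset.mem_filter.mpr ⟨hm.1, le_of_not_gt h⟩)
      exact min_eq_left hwe.le
    by_cases hcard : F.card < k
    · have h1 := hfree_lb S F hS hSu hFsub hcard
      have hkF : (0:ℝ) < (k:ℝ) - F.card := by
        have : (F.card:ℝ) < k := by exact_mod_cast hcard
        linarith
      rw [le_div_iff₀ hkF] at h1
      have h2 : (F.card : ℝ) * lam ≤ (F.card : ℝ) * ((1 + ε) * lam) := by
        have : (0:ℝ) ≤ (F.card:ℝ) := Nat.cast_nonneg _
        nlinarith
      rw [hsplit, hDsum, hFsum]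
      nlinarith [h1, h2]
    · push_neg at hcard
      have hkF : (k:ℝ) ≤ (F.card:ℝ) := by exact_mod_cast hcard
      have hD0 : 0 ≤ ∑ e ∈ cutEdges ends S \ F, min (w e) ((1 + ε) * lam) :=
        Finset.sum_nonneg fun e _ => le_min (hw e) hρ.le
      rw [hsplit, hFsum]
      nlinarith [hD0, hkF]
  · obtain ⟨S, F, hS, hSu, hFsub, hcard, hlt⟩ := hfree_ub
    refine ⟨S, hS, hSu, ?_⟩
    have hkF : (0:ℝ) < (k:ℝ) - F.card := by
      have : (F.card:ℝ) < k := by exact_mod_cast hcard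
      linarith
    rw [div_lt_iff₀ hkF] at hlt
    have hsplit : ∑ e ∈ cutEdges ends S, min (w e) ((1 + ε) * lam)
        = ∑ e ∈ cutEdges ends S \ F, min (w e) ((1 + ε) * lam)
          + ∑ e ∈ F, min (w e) ((1 + ε) * lam) := (Finset.sum_sdiff hFsub).symm
    have h1 : ∑ e ∈ cutEdges ends S \ F, min (w e) ((1 + ε) * lam)
        ≤ ∑ e ∈ cutEdges ends S \ F, w e :=
      Finset.sum_le_sum fun e _ => min_le_left _ _
    have h2 : ∑ e ∈ F, min (w e) ((1 + ε) * lam) ≤ (F.card : ℝ) * ((1 + ε) * lam) := by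
      calc ∑ e ∈ F, min (w e) ((1 + ε) * lam) ≤ ∑ e ∈ F, (1 + ε) * lam :=
            Finset.sum_le_sum fun e _ => min_le_right _ _
        _ = (F.card : ℝ) * ((1 + ε) * lam) := by rw [Finset.sum_const, nsmul_eq_mul]
    rw [hsplit]
    nlinarith [h1, h2, hlt]
end

section
/- Let P be a path with a distinguished vertex r, and suppose every 2-respecting interval cut of P not containing r has weight ≥ (1+ε)λ (with respect to a posi-modular cut weight function). Then the number of 2-respecting interval cuts of P with weight < (1+ε)λ is at most |E(P)|. -/
/-!
A small cut avoiding `r` is excluded by hypothesis, so every small interval cut `(a, b)`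
satisfies `a < r ≤ b`. Two such cuts `(a, b)`, `(c, d)` with `a < c` and `b < d` cross, and
posi-modularity bounds the sum of their weights below by the weights of the two differences
`(a, c)` and `(b, d)`, which avoid `r` and hence are large. So the small cuts, viewed as a 0-1
matrix with rows `a < r` and columns `r ≤ b < L`, avoid a 2 × 2 pattern; distinct ones then
lie on distinct diagonals, of which there are fewer than `L`.
-/

open Finset

theorem Finset.card_le_of_forall_not_lt_lt {S : Finset (ℕ × ℕ)} {a b c d : ℕ}
    (hS : S ⊆ Ico a b ×ˢ Ico c d) (hpat : ∀ p ∈ S, ∀ q ∈ S, ¬(p.1 < q.1 ∧ p.2 < q.2)) :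
    #S ≤ (b - a) + (d - c) - 1 := by
  have hbox : ∀ p ∈ S, a ≤ p.1 ∧ p.1 < b ∧ c ≤ p.2 ∧ p.2 < d := fun p hp => by
    simpa only [mem_product, mem_Ico, and_assoc] using hS hp
  simpa using card_le_card_of_injOn (fun p => (p.1 - a) + (d - 1 - p.2))
    (t := range ((b - a) + (d - c) - 1))
    (fun p hp => by have := hbox p hp; simp only [coe_range, Set.mem_Iio]; omega)
    (fun p hp q hq hpq => by
      have := hbox p hp; have := hbox q hq
      have := hpat p hp q hq; have := hpat q hq p hp
      simp only at hpq
      exact Prod.ext (by omega) (by omega))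

theorem add_le_add_of_posiModular_of_Icc_crossing {f : Finset ℕ → ℝ}
    (hposi : ∀ X Y : Finset ℕ, f (X \ Y) + f (Y \ X) ≤ f X + f Y)
    {a b c d : ℕ} (hac : a ≤ c) (hcb : c ≤ b) (hbd : b ≤ d) :
    f (Icc (a + 1) c) + f (Icc (b + 1) d) ≤ f (Icc (a + 1) b) + f (Icc (c + 1) d) := by
  have hleft : Icc (a + 1) b \ Icc (c + 1) d = Icc (a + 1) c := by
    ext x; simp only [mem_sdiff, mem_Icc]; omega
  have hright : Icc (c + 1) d \ Icc (a + 1) b = Icc (b + 1) d := by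
    ext x; simp only [mem_sdiff, mem_Icc]; omega
  simpa only [hleft, hright] using hposi (Icc (a + 1) b) (Icc (c + 1) d)

theorem path_small_cuts_linear_general (L r : ℕ) (ε lam : ℝ)
    (f : Finset ℕ → ℝ)
    (hposi : ∀ X Y : Finset ℕ, f (X \ Y) + f (Y \ X) ≤ f X + f Y)
    (hside : ∀ a b : ℕ, a < b → b < L → ¬(a < r ∧ r ≤ b) →
      (1 + ε) * lam ≤ f (Finset.Icc (a + 1) b)) :
    ((Finset.range L ×ˢ Finset.range L).filter fun p =>
        p.1 < p.2 ∧ f (Finset.Icc (p.1 + 1) p.2) < (1 + ε) * lam).card ≤ L := by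
  set S := (range L ×ˢ range L).filter fun p =>
    p.1 < p.2 ∧ f (Icc (p.1 + 1) p.2) < (1 + ε) * lam
  have hsmall : ∀ p ∈ S,
      p.1 < r ∧ r ≤ p.2 ∧ p.2 < L ∧ f (Icc (p.1 + 1) p.2) < (1 + ε) * lam := by
    intro p hp
    simp only [S, mem_filter, mem_product, mem_range] at hp
    have hr : p.1 < r ∧ r ≤ p.2 := by
      by_contra h
      exact (hside p.1 p.2 hp.2.1 hp.1.2 h).not_gt hp.2.2
    exact ⟨hr.1, hr.2, hp.1.2, hp.2.2⟩
  have hsub : S ⊆ Ico 0 (min r L) ×ˢ Ico r L := fun p hp => by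
    have := hsmall p hp
    simp only [mem_product, mem_Ico, lt_min_iff]; omega
  have hpat : ∀ p ∈ S, ∀ q ∈ S, ¬(p.1 < q.1 ∧ p.2 < q.2) := by
    rintro p hp q hq ⟨h1, h2⟩
    obtain ⟨hp1, hp2, -, hpf⟩ := hsmall p hp
    obtain ⟨hq1, hq2, hq3, hqf⟩ := hsmall q hq
    have := add_le_add_of_posiModular_of_Icc_crossing hposi h1.le (by omega) h2.le
    have := hside p.1 q.1 h1 (by omega) (by omega)
    have := hside p.2 q.2 h2 hq3 (by omega)
    linarith
  calc #S ≤ (min r L - 0) + (L - r) - 1 := card_le_of_forall_not_lt_lt hsub hpat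
    _ ≤ L := by omega

/-- On a path with `L` edges (edge `i` joining vertices `i` and `i+1`), an interval
`[a, b]` of two deleted edges `a < b` induces the middle cut `Icc (a+1) b`, with weight
given by a posi-modular cut function `f`.  If every interval cut not containing the
distinguished vertex `r` has weight at least `(1+ε)λ`, then the number of interval cuts
with weight less than `(1+ε)λ` is at most `|E(P)| = L`. -/
theorem path_small_cuts_linear (L r : ℕ) (ε lam : ℝ) (hε : 0 < ε) (hlam : 0 < lam)
    (f : Finset ℕ → ℝ)
    (hposi : ∀ X Y : Finset ℕ, f (X \ Y) + f (Y \ X) ≤ f X + f Y)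
    (hside : ∀ a b : ℕ, a < b → b < L → ¬(a < r ∧ r ≤ b) →
      (1 + ε) * lam ≤ f (Finset.Icc (a + 1) b)) :
    ((Finset.range L ×ˢ Finset.range L).filter fun p =>
        p.1 < p.2 ∧ f (Finset.Icc (p.1 + 1) p.2) < (1 + ε) * lam).card ≤ L :=
  path_small_cuts_linear_general L r ε lam f hposi hside
end

section
/- If a rooted tree decomposition into edge-disjoint paths 𝒫 has the property that every root-to-leaf path intersects at most log n paths of 𝒫, and for every tree edge e the set of edges in which e is cross-interested (resp. down-interested) forms a path from the root (resp. a downward path from e), then every tree edge is cross-interested (resp. down-interested) in at most log n paths of 𝒫, and hence the total number of interested path pairs is at most O(n log n). -/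
open Classical in
/-- Counting interested path pairs: let the edges of a rooted spanning tree on `n`
vertices be decomposed into a family `Ps` of pairwise edge-disjoint paths such that every
root-to-leaf path `R ∈ Rs` intersects at most `log n` members of `Ps`, and suppose that
for every tree edge `e` the set of edges it is (cross- or down-) interested in is
contained in some root-to-leaf path `R ∈ Rs`.  Then every tree edge is interested in at
most `log n` paths of `Ps`, and the total number of interested path pairs is at most
`n · log n = O(n log n)`. -/
theorem interested_path_pairs_bound {E : Type*} [Fintype E] [DecidableEq E]
    (n : ℕ) (hE : Fintype.card E ≤ n)
    (Ps : Finset (Finset E))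
    (hdisj : (Ps : Set (Finset E)).Pairwise fun P Q => Disjoint P Q)
    (Rs : Set (Finset E))
    (hbough : ∀ R ∈ Rs, (Ps.filter fun P => ¬ Disjoint P R).card ≤ Nat.log 2 n)
    (Int : E → E → Prop)
    (hpath : ∀ e : E, ∃ R ∈ Rs, ∀ f : E, Int e f → f ∈ R) :
    (∀ e : E, (Ps.filter fun Q => ∃ f ∈ Q, Int e f).card ≤ Nat.log 2 n) ∧
    ((Ps ×ˢ Ps).filter fun pq => ∃ e ∈ pq.1, ∃ f ∈ pq.2, Int e f).card ≤
      n * Nat.log 2 n := by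
  have key : ∀ e : E, (Ps.filter fun Q => ∃ f ∈ Q, Int e f).card ≤ Nat.log 2 n := by
    intro e
    obtain ⟨R, hR, hRint⟩ := hpath e
    refine le_trans (Finset.card_le_card ?_) (hbough R hR)
    intro Q hQ
    simp only [Finset.mem_filter] at hQ ⊢
    obtain ⟨hQPs, f, hfQ, hInt⟩ := hQ
    exact ⟨hQPs, fun hd => (Finset.disjoint_left.mp hd hfQ) (hRint f hInt)⟩
  refine ⟨key, ?_⟩
  have hsplit : ((Ps ×ˢ Ps).filter fun pq => ∃ e ∈ pq.1, ∃ f ∈ pq.2, Int e f).card =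
      ∑ P ∈ Ps, (Ps.filter fun Q => ∃ e ∈ P, ∃ f ∈ Q, Int e f).card := by
    simp only [Finset.card_filter, Finset.sum_product]
  rw [hsplit]
  have hinner : ∀ P ∈ Ps,
      (Ps.filter fun Q => ∃ e ∈ P, ∃ f ∈ Q, Int e f).card ≤ P.card * Nat.log 2 n := by
    intro P _
    have hsub : (Ps.filter fun Q => ∃ e ∈ P, ∃ f ∈ Q, Int e f) ⊆
        P.biUnion fun e => Ps.filter fun Q => ∃ f ∈ Q, Int e f := by
      intro Q hQ
      simp only [Finset.mem_filter, Finset.mem_biUnion] at hQ ⊢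
      obtain ⟨hQPs, e, heP, hf⟩ := hQ
      exact ⟨e, heP, hQPs, hf⟩
    calc (Ps.filter fun Q => ∃ e ∈ P, ∃ f ∈ Q, Int e f).card
        ≤ (P.biUnion fun e => Ps.filter fun Q => ∃ f ∈ Q, Int e f).card :=
          Finset.card_le_card hsub
      _ ≤ ∑ e ∈ P, (Ps.filter fun Q => ∃ f ∈ Q, Int e f).card :=
          Finset.card_biUnion_le
      _ ≤ ∑ _e ∈ P, Nat.log 2 n := Finset.sum_le_sum fun e _ => key e
      _ = P.card * Nat.log 2 n := by rw [Finset.sum_const, smul_eq_mul]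
  calc ∑ P ∈ Ps, (Ps.filter fun Q => ∃ e ∈ P, ∃ f ∈ Q, Int e f).card
      ≤ ∑ P ∈ Ps, P.card * Nat.log 2 n := Finset.sum_le_sum hinner
    _ = (∑ P ∈ Ps, P.card) * Nat.log 2 n := by rw [Finset.sum_mul]
    _ ≤ n * Nat.log 2 n := by
        refine Nat.mul_le_mul_right _ ?_
        calc ∑ P ∈ Ps, P.card = (Ps.biUnion id).card :=
              (Finset.card_biUnion fun P hP Q hQ hne => hdisj hP hQ hne).symm
          _ ≤ Fintype.card E := Finset.card_le_univ _
          _ ≤ n := hE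
end
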